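/- Let x₁, …, x_n be i.i.d. N(μ, σ²) with σ > 0 and let y_i = 1{x_i > 0}⌈x_i⌉. Then for all δ > 0 there exists N such that for all n > N, P[max_{1≤i≤n} y_i < σ·(2δ/√(log n) + √(2 log n)) + μ + 1] > exp(-e^{-δ/2}). -/

import Mathlib

/-!
The Gumbel limit is not needed: an explicit Gaussian tail bound already gives the estimate for
every large `n`. Shifting the density and using symmetry about the mean,
`P[X ≥ μ + σ c] ≤ e^{-c²/2} / 2`. For `c = 2δ/√L + √(2L)` with `L = log n` one has
`c²/2 ≥ L + 2√2 δ`, so `n` times this tail is below `e^{-δ/2} / 2`. Independence and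
Bernoulli's inequality then give
`P[max_{i<n} x_i < μ + σ c] ≥ (1 - e^{-c²/2}/2)^n > exp(-e^{-δ/2})`.
Finally `x_i < a` forces `y_i < a + 1` as soon as `a + 1 > 0`, which holds for large `n`.
-/

open MeasureTheory ProbabilityTheory Real Set Filter

namespace ProbabilityTheory

variable {m : ℝ} {v : NNReal}

lemma gaussianReal_Ici_self (hv : v ≠ 0) : gaussianReal m v (Ici m) = 2⁻¹ := by
  have := nullSingletonClass_gaussianReal (μ := m) hv
  have hreflect : gaussianReal m v (Iic m) = gaussianReal m v (Ici m) := by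
    conv_lhs => rw [← show 2 * m - m = m by ring, ← gaussianReal_map_const_sub (2 * m)]
    rw [Measure.map_apply (by fun_prop) measurableSet_Iic]
    congr 1
    ext z
    simp only [mem_preimage, mem_Iic, mem_Ici]
    constructor <;> intro <;> linarith
  have hsum : gaussianReal m v (Ici m) + gaussianReal m v (Iio m) = 1 := by
    rw [← compl_Ici, measure_add_measure_compl measurableSet_Ici, measure_univ]
  rw [measure_congr Iio_ae_eq_Iic, hreflect, ← two_mul] at hsum
  exact ENNReal.eq_inv_of_mul_eq_one_left (by rwa [mul_comm] at hsum)

lemma gaussianPDFReal_le_exp_mul_gaussianPDFReal_add {t z : ℝ} (ht : 0 ≤ t) (hz : m + t ≤ z) :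
    gaussianPDFReal m v z ≤ exp (-t ^ 2 / (2 * v)) * gaussianPDFReal (m + t) v z := by
  simp only [gaussianPDFReal]
  rw [mul_left_comm, ← exp_add, ← add_div]
  gcongr
  nlinarith [mul_nonneg ht (sub_nonneg.2 hz)]

lemma gaussianReal_Ici_add_le (hv : v ≠ 0) {t : ℝ} (ht : 0 ≤ t) :
    gaussianReal m v (Ici (m + t)) ≤ ENNReal.ofReal (exp (-t ^ 2 / (2 * v)) / 2) := by
  set E := exp (-t ^ 2 / (2 * v))
  calc gaussianReal m v (Ici (m + t)) = ∫⁻ z in Ici (m + t), gaussianPDF m v z :=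
        gaussianReal_apply _ hv _
    _ ≤ ∫⁻ z in Ici (m + t), ENNReal.ofReal E * gaussianPDF (m + t) v z := by
        refine setLIntegral_mono (by fun_prop) fun z hz => ?_
        rw [gaussianPDF, gaussianPDF, ← ENNReal.ofReal_mul (exp_pos _).le]
        exact ENNReal.ofReal_le_ofReal (gaussianPDFReal_le_exp_mul_gaussianPDFReal_add ht hz)
    _ = ENNReal.ofReal E * gaussianReal (m + t) v (Ici (m + t)) := by
        rw [lintegral_const_mul _ (measurable_gaussianPDF _ _), gaussianReal_apply _ hv]
    _ = ENNReal.ofReal (E / 2) := by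
        rw [gaussianReal_Ici_self hv, ENNReal.ofReal_div_of_pos two_pos, ENNReal.ofReal_ofNat,
          div_eq_mul_inv]

lemma ofReal_one_sub_le_gaussianReal_Iio_add (hv : v ≠ 0) {t : ℝ} (ht : 0 ≤ t) :
    ENNReal.ofReal (1 - exp (-t ^ 2 / (2 * v)) / 2) ≤ gaussianReal m v (Iio (m + t)) := by
  rw [← compl_Ici, measure_compl measurableSet_Ici (measure_ne_top _ _), measure_univ,
    ENNReal.ofReal_sub _ (by positivity), ENNReal.ofReal_one]
  exact tsub_le_tsub_left (gaussianReal_Ici_add_le hv ht) 1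

lemma iIndepFun.measure_biInter_preimage_eq_pow {Ω ι β : Type*} [MeasurableSpace Ω]
    [MeasurableSpace β] {P : Measure Ω} {x : ι → Ω → β} (hindep : iIndepFun x P)
    (hmeas : ∀ i, Measurable (x i)) {ν : Measure β} (hlaw : ∀ i, P.map (x i) = ν)
    {s : Set β} (hs : MeasurableSet s) (S : Finset ι) :
    P (⋂ i ∈ S, x i ⁻¹' s) = ν s ^ S.card := by
  rw [hindep.meas_biInter fun i _ => ⟨s, hs, rfl⟩, Finset.prod_congr rfl fun i _ => ?_,
    Finset.prod_const]
  rw [← hlaw i, Measure.map_apply (hmeas i) hs]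

lemma ofReal_one_sub_pow_le_measure_biInter_preimage_Iio {Ω : Type*} [MeasurableSpace Ω]
    {P : Measure Ω} {x : ℕ → Ω → ℝ} (hindep : iIndepFun x P)
    (hmeas : ∀ i, Measurable (x i)) (hlaw : ∀ i, P.map (x i) = gaussianReal m v) (hv : v ≠ 0)
    {t : ℝ} (ht : 0 ≤ t) (n : ℕ) :
    ENNReal.ofReal ((1 - exp (-t ^ 2 / (2 * v)) / 2) ^ n)
      ≤ P (⋂ i ∈ Finset.range n, x i ⁻¹' Iio (m + t)) := by
  have hE : exp (-t ^ 2 / (2 * v)) ≤ 1 :=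
    exp_le_one_iff.2 (div_nonpos_of_nonpos_of_nonneg (by nlinarith) (by positivity))
  rw [hindep.measure_biInter_preimage_eq_pow hmeas hlaw measurableSet_Iio, Finset.card_range,
    ENNReal.ofReal_pow (by linarith)]
  gcongr
  exact ofReal_one_sub_le_gaussianReal_Iio_add hv ht

end ProbabilityTheory

lemma exp_neg_sq_div_two_lt {L δ : ℝ} (hL : 0 < L) (hδ : 0 < δ) :
    exp (-(2 * δ / √L + √(2 * L)) ^ 2 / 2) < exp (-L) * exp (-δ / 2) := by
  rw [← exp_add, exp_lt_exp]
  have hcross : 2 * δ / √L * √(2 * L) = 2 * √2 * δ := by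
    rw [sqrt_mul zero_le_two]; field_simp
  have hsq : √(2 * L) ^ 2 = 2 * L := sq_sqrt (by positivity)
  have hsqrt2 : 1 ≤ √2 := one_le_sqrt.2 one_le_two
  nlinarith [sq_nonneg (2 * δ / √L)]

lemma exp_neg_lt_one_sub_pow {X B : ℝ} {n : ℕ} (hX0 : 0 < X) (hX1 : X ≤ 1) (hB : B ≤ 2)
    (h : n * B < X / 2) : exp (-X) < (1 - B) ^ n :=
  calc exp (-X) < (1 + X)⁻¹ := by
        rw [exp_neg, add_comm]; exact inv_strictAnti₀ (by positivity) (add_one_lt_exp hX0.ne')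
    _ ≤ 1 - X / 2 := by
        rw [inv_le_iff_one_le_mul₀ (by positivity)]; nlinarith
    _ < 1 + n * -B := by linarith
    _ ≤ (1 - B) ^ n := by rw [sub_eq_add_neg]; exact one_add_mul_le_pow (by linarith) n

lemma exp_neg_exp_lt_one_sub_pow_of_log_pos {n : ℕ} {δ : ℝ} (hn : 0 < log n) (hδ : 0 < δ) :
    exp (-exp (-δ / 2))
      < (1 - exp (-(2 * δ / √(log n) + √(2 * log n)) ^ 2 / 2) / 2) ^ n := by
  set c := 2 * δ / √(log n) + √(2 * log n)
  have hn0 : (0 : ℝ) < n := Nat.cast_pos.2 (Nat.pos_of_ne_zero (by rintro rfl; simp at hn))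
  have hE1 : exp (-c ^ 2 / 2) ≤ 1 := exp_le_one_iff.2 (by linarith [sq_nonneg c])
  have hE : exp (-c ^ 2 / 2) < (n : ℝ)⁻¹ * exp (-δ / 2) := by
    simpa only [exp_neg, exp_log hn0] using exp_neg_sq_div_two_lt hn hδ
  refine exp_neg_lt_one_sub_pow (exp_pos _) (exp_le_one_iff.2 (by linarith)) (by linarith) ?_
  calc (n : ℝ) * (exp (-c ^ 2 / 2) / 2) < n * ((n : ℝ)⁻¹ * exp (-δ / 2)) / 2 := by
        rw [mul_div_assoc]; gcongr
    _ = exp (-δ / 2) / 2 := by field_simp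

lemma eventually_log_pos_and_mul_sqrt_add_pos {a : ℝ} (ha : 0 < a) (b : ℝ) :
    ∀ᶠ n : ℕ in atTop, 0 < log n ∧ 0 < a * √(2 * log n) + b := by
  have hlog : Tendsto (fun n : ℕ => log n) atTop atTop :=
    tendsto_log_atTop.comp tendsto_natCast_atTop_atTop
  have hgrow : Tendsto (fun n : ℕ => a * √(2 * log n) + b) atTop atTop :=
    tendsto_atTop_add_const_right _ _
      ((tendsto_sqrt_atTop.comp (hlog.const_mul_atTop two_pos)).const_mul_atTop ha)
  exact (hlog.eventually_gt_atTop 0).and (hgrow.eventually_gt_atTop 0)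

lemma ite_pos_ceil_lt_add_one {r a : ℝ} (hr : r < a) (ha : 0 < a + 1) :
    (if 0 < r then (⌈r⌉ : ℝ) else 0) < a + 1 := by
  split_ifs
  · linarith [Int.ceil_lt_add_one r]
  · exact ha

/-- For i.i.d. `x_i ∼ N(μ, σ²)` with `σ > 0` and
`y_i = 1{x_i > 0}⌈x_i⌉`, for every `δ > 0` there is `N` such that for all `n > N`,
`P[max_{1≤i≤n} y_i < σ(2δ/√(log n) + √(2 log n)) + μ + 1] > exp(-e^{-δ/2})`. -/
theorem stmt19 {Ω : Type*} [MeasurableSpace Ω] (P : Measure Ω) [IsProbabilityMeasure P]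
    (μ σ : ℝ) (hσ : 0 < σ)
    (x : ℕ → Ω → ℝ) (hmeas : ∀ i, Measurable (x i))
    (hindep : iIndepFun x P)
    (hlaw : ∀ i, Measure.map (x i) P = gaussianReal μ (⟨σ ^ 2, sq_nonneg σ⟩ : NNReal))
    (y : ℕ → Ω → ℝ)
    (hy : ∀ i ω, y i ω = if 0 < x i ω then (⌈x i ω⌉ : ℝ) else 0) :
    ∀ δ > (0 : ℝ), ∃ N : ℕ, ∀ n > N,
      P {ω | ∀ i < n, y i ω
          < σ * (2 * δ / Real.sqrt (Real.log n) + Real.sqrt (2 * Real.log n)) + μ + 1}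
        > ENNReal.ofReal (Real.exp (-Real.exp (-δ / 2))) := by
  intro δ hδ
  obtain ⟨N, hN⟩ := eventually_atTop.1 (eventually_log_pos_and_mul_sqrt_add_pos hσ (μ + 1))
  refine ⟨N, fun n hn => ?_⟩
  obtain ⟨hL, hpos⟩ := hN n hn.le
  set c := 2 * δ / √(log n) + √(2 * log n)
  have hc : √(2 * log n) ≤ c := le_add_of_nonneg_left (by positivity)
  have hsub : (⋂ i ∈ Finset.range n, x i ⁻¹' Iio (μ + σ * c)) ⊆
      {ω | ∀ i < n, y i ω < σ * c + μ + 1} := by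
    intro ω hω i hi
    have hxi : x i ω < μ + σ * c := mem_iInter₂.1 hω i (Finset.mem_range.2 hi)
    rw [hy]
    exact ite_pos_ceil_lt_add_one (by linarith) (by nlinarith)
  have hexponent : -(σ * c) ^ 2 / (2 * (σ ^ 2 : ℝ)) = -c ^ 2 / 2 := by field_simp
  calc ENNReal.ofReal (exp (-exp (-δ / 2))) < ENNReal.ofReal ((1 - exp (-c ^ 2 / 2) / 2) ^ n) :=
        (ENNReal.ofReal_lt_ofReal_iff_of_nonneg (exp_pos _).le).2
          (exp_neg_exp_lt_one_sub_pow_of_log_pos hL hδ)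
    _ ≤ P (⋂ i ∈ Finset.range n, x i ⁻¹' Iio (μ + σ * c)) := by
        rw [← hexponent]
        exact ofReal_one_sub_pow_le_measure_biInter_preimage_Iio hindep hmeas hlaw
          (fun h => (pow_pos hσ 2).ne' (congrArg NNReal.toReal h)) (by positivity) n
    _ ≤ _ := measure_mono hsub
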